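/- For s, r ∈ ℕ with s ≥ r define N₀^{(s,r)} := [ binom(s,r) · Γ(1/2+s)·Γ(1+r) / ( Γ((1+r+s)/2) · Γ(1+(r+s)/2) ) ]^{1/2}. Then for each fixed r ∈ ℕ, lim_{s→∞} N₀^{(s,r)} / N₀^{(s,0)} = 2^{r/2}. (The normalization limit used in Corollary 4.5 to identify the Pauli–Lubanski limit of the fields A^{(s,r)} with the infinite-spin fields Φ^{κ(r)}.) -/

import Mathlib

/-!
Legendre's duplication formula turns the denominator of `N₀^{(s,r)}²` into
`√π (r+s)! / 2^(r+s)`. Hence `(N₀^{(s,r)} / N₀^{(s,0)})² = 2^r · s(s-1)⋯(s-r+1) / ((s+1)⋯(s+r))`,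
a quotient of two monic polynomials of degree `r` in `s`, which tends to `1`.
-/

noncomputable section

open Filter

/-- The normalization constants `N₀^{(s,r)}`. -/
def N0 (s r : ℕ) : ℝ :=
  Real.sqrt ((Nat.choose s r : ℝ) * Real.Gamma (1 / 2 + (s : ℝ)) * Real.Gamma (1 + (r : ℝ)) /
    (Real.Gamma ((1 + (r : ℝ) + (s : ℝ)) / 2) * Real.Gamma (1 + ((r : ℝ) + (s : ℝ)) / 2)))

open Topology Polynomial Real

theorem Polynomial.Monic.tendsto_eval_div_eval {P Q : ℝ[X]} (hP : P.Monic) (hQ : Q.Monic)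
    (hdeg : P.natDegree = Q.natDegree) :
    Tendsto (fun x => P.eval x / Q.eval x) atTop (𝓝 1) := by
  have h := div_tendsto_atTop_leadingCoeff_div_of_degree_eq P Q
    (by rw [degree_eq_natDegree hP.ne_zero, degree_eq_natDegree hQ.ne_zero, hdeg])
  rwa [hP.leadingCoeff, hQ.leadingCoeff, div_one] at h

theorem tendsto_descFactorial_div_ascFactorial (r : ℕ) :
    Tendsto (fun s : ℕ => (s.descFactorial r : ℝ) / (s + 1).ascFactorial r) atTop (𝓝 1) := by
  have hQ : ((ascPochhammer ℝ r).comp (X + C 1)).Monic :=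
    (monic_ascPochhammer ℝ r).comp (monic_X_add_C 1) (by rw [natDegree_X_add_C]; exact one_ne_zero)
  have hdeg : (descPochhammer ℝ r).natDegree = ((ascPochhammer ℝ r).comp (X + C 1)).natDegree := by
    rw [natDegree_comp, natDegree_X_add_C, descPochhammer_natDegree, ascPochhammer_natDegree,
      mul_one]
  refine (((monic_descPochhammer ℝ r).tendsto_eval_div_eval hQ hdeg).comp
    tendsto_natCast_atTop_atTop).congr fun s => ?_
  simp only [Function.comp_apply, eval_comp, eval_add, eval_X, eval_C,
    descPochhammer_eval_eq_descFactorial, ← Nat.cast_succ, ascPochhammer_nat_eq_natCast_ascFactorial]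

theorem Real.Gamma_succ_half_mul_Gamma_half_add_one (m : ℕ) :
    Gamma ((1 + m) / 2) * Gamma (1 + m / 2) = √π * m.factorial / 2 ^ m := by
  have h := Gamma_mul_Gamma_add_half ((1 + m) / 2)
  rw [show (1 + (m : ℝ)) / 2 + 1 / 2 = 1 + m / 2 by ring,
    show 2 * ((1 + (m : ℝ)) / 2) = m + 1 by ring, show 1 - ((m : ℝ) + 1) = -m by ring,
    Gamma_nat_eq_factorial, rpow_neg zero_le_two, rpow_natCast] at h
  rw [h]
  field_simp

theorem N0_eq_sqrt_mul_N0_zero (s r : ℕ) :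
    N0 s r = √(2 ^ r * ((s.descFactorial r : ℝ) / (s + 1).ascFactorial r)) * N0 s 0 := by
  have hΓ (k : ℕ) : Gamma ((1 + k + s) / 2) * Gamma (1 + (k + s) / 2) =
      √π * (k + s).factorial / 2 ^ (k + s) := by
    rw [← Gamma_succ_half_mul_Gamma_half_add_one, add_assoc]; push_cast; rfl
  have hdesc : (s.descFactorial r : ℝ) = s.choose r * r.factorial := by
    rw [Nat.descFactorial_eq_factorial_mul_choose, mul_comm]; push_cast; rfl
  have hasc : ((r + s).factorial : ℝ) = s.factorial * (s + 1).ascFactorial r := by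
    rw [add_comm r, ← Nat.factorial_mul_ascFactorial]; push_cast; rfl
  rw [N0, N0, ← sqrt_mul (by positivity), hΓ r, hΓ 0, hdesc, hasc]
  simp only [Nat.cast_zero, add_zero, zero_add, Nat.choose_zero_right, Nat.cast_one,
    Gamma_one, one_mul, mul_one]
  rw [add_comm (1 : ℝ), Gamma_nat_eq_factorial]
  congr 1
  field_simp
  ring

theorem N0_zero_pos (s : ℕ) : 0 < N0 s 0 := by
  rw [N0, Nat.choose_zero_right, Nat.cast_one]
  positivity

/-- The normalization limit of Corollary 4.5: for fixed `r`,
`N₀^{(s,r)}/N₀^{(s,0)} → 2^{r/2}` as `s → ∞`. -/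
theorem normalization_limit (r : ℕ) :
    Tendsto (fun s : ℕ => N0 s r / N0 s 0) atTop (nhds ((2 : ℝ) ^ ((r : ℝ) / 2))) := by
  have hratio (s : ℕ) : N0 s r / N0 s 0 =
      √(2 ^ r * ((s.descFactorial r : ℝ) / (s + 1).ascFactorial r)) := by
    rw [N0_eq_sqrt_mul_N0_zero, mul_div_cancel_right₀ _ (N0_zero_pos s).ne']
  have hlim : (2 : ℝ) ^ ((r : ℝ) / 2) = √(2 ^ r * 1) := by
    rw [mul_one, sqrt_eq_rpow, ← rpow_natCast, ← rpow_mul zero_le_two, mul_one_div]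
  simp_rw [hratio, hlim]
  exact ((tendsto_descFactorial_div_ascFactorial r).const_mul _).sqrt
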